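/- Let u(ρ) = umax(ρmax - ρ)/ρmax be the linear Greenshields velocity on [0, ρmax] with umax, ρmax > 0, and let z > 0 be fixed. Then the function ρ ↦ ρ · 2zu(ρ)/(z + u(ρ)) is strictly concave on [0, ρmax]. -/

import Mathlib

/-!
Write `w(ρ) = z + u(ρ)`, which is affine in `ρ` and positive on `[0, ρmax]`. Since
`ρ · 2zu/(z + u) = 2zρ - 2z²ρ/w` and `ρ` is itself affine in `w`, the function equals an affine
function of `ρ` minus a positive multiple of `1/w(ρ)`. The reciprocal of a positive affine
function is strictly convex, so the whole function is strictly concave.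
-/

open Set

theorem StrictConvexOn.comp_affine {s : Set ℝ} {f : ℝ → ℝ} (hf : StrictConvexOn ℝ s f)
    {a : ℝ} (ha : a ≠ 0) (b : ℝ) :
    StrictConvexOn ℝ ((fun x => a * x + b) ⁻¹' s) (fun x => f (a * x + b)) := by
  refine ⟨?_, fun x hx y hy hxy θ η hθ hη hθη => ?_⟩
  · exact hf.1.affine_preimage ⟨fun x => a * x + b, LinearMap.lsmul ℝ ℝ a, fun p v => by
      simp only [vadd_eq_add, LinearMap.lsmul_apply, smul_eq_mul]; ring⟩
  · have hxy' : a * x + b ≠ a * y + b := by simpa [ha] using hxy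
    have hcomb : a * (θ • x + η • y) + b = θ • (a * x + b) + η • (a * y + b) := by
      simp only [smul_eq_mul]; linear_combination (-b) * hθη
    simpa only [hcomb] using hf.2 hx hy hxy' hθ hη hθη

theorem strictConvexOn_inv_affine {a : ℝ} (ha : a ≠ 0) (b : ℝ) :
    StrictConvexOn ℝ {x | 0 < a * x + b} (fun x => (a * x + b)⁻¹) := by
  have hinv : StrictConvexOn ℝ (Ioi 0) (fun x : ℝ => x⁻¹) := by
    simpa only [zpow_neg_one] using strictConvexOn_zpow (m := -1) (by norm_num) (by norm_num)
  exact hinv.comp_affine ha b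

theorem StrictConvexOn.const_mul {s : Set ℝ} {f : ℝ → ℝ} (hf : StrictConvexOn ℝ s f) {c : ℝ}
    (hc : 0 < c) : StrictConvexOn ℝ s (fun x => c * f x) :=
  ⟨hf.1, fun x hx y hy hxy θ η hθ hη hθη => by
    simpa only [smul_eq_mul, mul_add, mul_left_comm c] using
      mul_lt_mul_of_pos_left (hf.2 hx hy hxy hθ hη hθη) hc⟩

theorem concaveOn_affine {s : Set ℝ} (hs : Convex ℝ s) (p q : ℝ) :
    ConcaveOn ℝ s (fun x => p * x + q) :=
  ⟨hs, fun x _ y _ θ η _ _ hθη => le_of_eq (by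
    simp only [smul_eq_mul]; linear_combination q * hθη)⟩

theorem stmt_3 (umax ρmax z : ℝ) (humax : 0 < umax) (hρmax : 0 < ρmax)
    (hz : 0 < z) (u : ℝ → ℝ)
    (hu : ∀ ρ, u ρ = umax * (ρmax - ρ) / ρmax) :
    StrictConcaveOn ℝ (Set.Icc (0:ℝ) ρmax)
      (fun ρ => ρ * (2 * z * u ρ / (z + u ρ))) := by
  set a := -(umax / ρmax)
  set b := z + umax
  -- `ρ = (ρmax / umax) (b - w)` turns the function into `2zρ + K - C / w`
  set C := 2 * z ^ 2 * ρmax * (z + umax) / umax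
  set K := 2 * z ^ 2 * ρmax / umax
  have hw : ∀ ρ, z + u ρ = a * ρ + b := fun ρ => by
    rw [hu]; simp only [a, b]; field_simp; ring
  have hw_pos : ∀ ρ ∈ Icc 0 ρmax, 0 < a * ρ + b := fun ρ ⟨_, hρ⟩ => by
    rw [← hw, hu]; have : 0 ≤ ρmax - ρ := by linarith
    positivity
  have hinv := strictConvexOn_inv_affine (a := a) (neg_lt_zero.mpr (by positivity)).ne b
  have hconc : StrictConcaveOn ℝ {ρ | 0 < a * ρ + b}
      (fun ρ => -(C * (a * ρ + b)⁻¹) + (2 * z * ρ + K)) :=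
    (hinv.const_mul (by positivity)).neg.add_concaveOn (concaveOn_affine hinv.1 _ _)
  refine (hconc.subset hw_pos (convex_Icc 0 ρmax)).congr fun ρ hρ => ?_
  have hw_ne : z + u ρ ≠ 0 := (hw ρ ▸ hw_pos ρ hρ).ne'
  simp only [← hw, C, K]
  field_simp
  rw [hu]
  field_simp
  ring
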